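/- arXiv:2505.04581 — 2 statements merged into one kernel-verified Lean document; each statement's English description precedes it below -/
import Mathlib

section
/- For all integers p ≥ 2 and m ≥ 1, the numbers c_{p,m} satisfy the recurrence c_{p,m} = c_{p−1,m−1} + c_{p−1,m} + 2(p−1)·c_{p−2,m−1}, where by convention c_{p,0} = 1 for all p ≥ 0 and c_{p,m} = 0 when m < 0 or when the corona graph C_p has no m-matching. -/
open Sum Matrix

/-- The corona graph `C_p` on vertices `v_1,…,v_p` (the `inl`s) and `w_1,…,w_p` (the `inr`s):
the `v_i` form a complete graph (internal edges) and each `v_i` is joined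
to `w_i` (pendant edges). -/
def corona (p : ℕ) : SimpleGraph (Fin p ⊕ Fin p) where
  Adj x y :=
    (∃ i j : Fin p, i ≠ j ∧ x = inl i ∧ y = inl j) ∨
    (∃ i : Fin p, x = inl i ∧ y = inr i) ∨
    (∃ i : Fin p, x = inr i ∧ y = inl i)
  symm := by
    constructor
    rintro x y (⟨i, j, hij, rfl, rfl⟩ | ⟨i, rfl, rfl⟩ | ⟨i, rfl, rfl⟩)
    · exact Or.inl ⟨j, i, hij.symm, rfl, rfl⟩
    · exact Or.inr (Or.inr ⟨i, rfl, rfl⟩)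
    · exact Or.inr (Or.inl ⟨i, rfl, rfl⟩)
  loopless := by
    constructor
    rintro x (⟨i, j, hij, rfl, h⟩ | ⟨i, rfl, h⟩ | ⟨i, rfl, h⟩)
    · exact hij (by simpa using h)
    · simp at h
    · simp at h

/-- `s` is an `m`-matching of the graph `G`: a set of `m` edges of `G`,
no two of which share a vertex. -/
def IsNMatching {V : Type*} (G : SimpleGraph V) (m : ℕ) (s : Finset (Sym2 V)) : Prop :=
  s.card = m ∧ (∀ e ∈ s, e ∈ G.edgeSet) ∧
    ∀ e ∈ s, ∀ f ∈ s, e ≠ f → ∀ v : V, v ∈ e → v ∉ f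

/-- An edge of the corona graph is internal if both of its endpoints are `v`-vertices. -/
def isInternal {p : ℕ} (e : Sym2 (Fin p ⊕ Fin p)) : Prop :=
  ∀ v ∈ e, Sum.isLeft v = true

open Classical in
/-- `c_{p,m}`: the sum, over the `m`-matchings `S` of the corona graph `C_p`, of `2^{i(S)}`,
where `i(S)` is the number of internal edges of `S`; equivalently, the number of
`m`-matchings of the double corona graph `C_p^{(2)}`. (For `m = 0` this is `1`, and it is
`0` whenever `C_p` has no `m`-matching.) -/
noncomputable def cNum (p m : ℕ) : ℕ :=
  ∑ s ∈ Finset.univ.filter (fun s : Finset (Sym2 (Fin p ⊕ Fin p)) =>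
      IsNMatching (corona p) m s),
    2 ^ (s.filter (fun e => isInternal e)).card

/-!
Classify the matchings of `C_p` by what they do at a fixed vertex `v_a`: it is unmatched (then
`w_a` is isolated and what remains is `C_{p-1}`), matched to `w_a` (weight `1`, leaving `C_{p-1}`),
or matched to one of the `p - 1` other `v_b` (weight `2`, leaving `C_{p-2}` once the now isolated
`w_a`, `w_b` are discarded). To compare these pieces with smaller coronas, weighted matching counts
are taken inside a vertex set `U` of a fixed graph; invariance under graph embeddings then
identifies the count on `{v_i, w_i : i ∈ S}` with `c_{|S|, m}`.
-/

namespace IsNMatching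

variable {V : Type*} {G : SimpleGraph V} {m : ℕ} {s : Finset (Sym2 V)} {e : Sym2 V}

theorem erase [DecidableEq V] (h : IsNMatching G (m + 1) s) (he : e ∈ s) :
    IsNMatching G m (s.erase e) :=
  ⟨by rw [Finset.card_erase_of_mem he, h.1]; rfl,
    fun f hf => h.2.1 f (Finset.mem_of_mem_erase hf),
    fun f hf f' hf' => h.2.2 f (Finset.mem_of_mem_erase hf) f' (Finset.mem_of_mem_erase hf')⟩

theorem insert [DecidableEq V] (h : IsNMatching G m s) (he : e ∈ G.edgeSet)
    (hdisj : ∀ f ∈ s, ∀ x ∈ e, x ∉ f) : IsNMatching G (m + 1) (insert e s) := by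
  have hes : e ∉ s := fun hes => hdisj e hes e.out.1 (Sym2.out_fst_mem e) (Sym2.out_fst_mem e)
  refine ⟨by rw [Finset.card_insert_of_notMem hes, h.1], ?_, ?_⟩
  · simpa [Finset.forall_mem_insert] using ⟨he, h.2.1⟩
  · simp only [Finset.forall_mem_insert]
    refine ⟨⟨fun h => (h rfl).elim, fun f hf _ x hx hxf => hdisj f hf x hx hxf⟩,
      fun f hf => ⟨fun _ x hx hxe => hdisj f hf x hxe hx, h.2.2 f hf⟩⟩

theorem map_iff {W : Type*} {H : SimpleGraph W} (f : G ↪g H) :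
    IsNMatching H m (s.map f.toEmbedding.sym2Map) ↔ IsNMatching G m s := by
  have hinj : Function.Injective (Sym2.map f) := Sym2.map.injective f.injective
  simp only [IsNMatching, Finset.card_map, Finset.forall_mem_map,
    Function.Embedding.sym2Map_apply, RelEmbedding.coe_toEmbedding, f.map_mem_edgeSet_iff,
    hinj.ne_iff, Sym2.mem_map, not_exists, not_and, forall_exists_index, and_imp,
    forall_apply_eq_imp_iff₂, f.injective.eq_iff]
  grind

end IsNMatching

namespace Finset

variable {α β : Type*} [DecidableEq α] [DecidableEq β] (s : Finset α) (t : Finset β)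

theorem disjSum_erase_inl (a : α) : (s.disjSum t).erase (Sum.inl a) = (s.erase a).disjSum t := by
  ext (x | x) <;> simp

theorem disjSum_erase_inr (b : β) : (s.disjSum t).erase (Sum.inr b) = s.disjSum (t.erase b) := by
  ext (x | x) <;> simp

end Finset

section MatchingWeight

open Finset

variable {V : Type*} (G : SimpleGraph V) (w : Sym2 V → ℕ)

open Classical in
noncomputable def matchingsIn (U : Finset V) (m : ℕ) : Finset (Finset (Sym2 V)) :=
  U.sym2.powerset.filter (IsNMatching G m)

noncomputable def matchingWeight (U : Finset V) (m : ℕ) : ℕ :=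
  ∑ s ∈ matchingsIn G U m, ∏ e ∈ s, w e

variable {G w} {U : Finset V} {m : ℕ} {s : Finset (Sym2 V)}

@[simp] theorem mem_matchingsIn :
    s ∈ matchingsIn G U m ↔ s ⊆ U.sym2 ∧ IsNMatching G m s := by
  simp [matchingsIn]

theorem matchingsIn_map {W : Type*} {H : SimpleGraph W} (f : G ↪g H) :
    matchingsIn H (U.map f.toEmbedding) m =
      (matchingsIn G U m).map (mapEmbedding f.toEmbedding.sym2Map).toEmbedding := by
  ext t
  simp only [mem_matchingsIn, sym2_map, subset_map_iff, mem_map, RelEmbedding.coe_toEmbedding,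
    mapEmbedding_apply]
  constructor
  · rintro ⟨⟨s, hs, rfl⟩, ht⟩
    exact ⟨s, ⟨hs, (IsNMatching.map_iff f).1 ht⟩, rfl⟩
  · rintro ⟨s, ⟨hs, hM⟩, rfl⟩
    exact ⟨⟨s, hs, rfl⟩, (IsNMatching.map_iff f).2 hM⟩

theorem matchingWeight_map {W : Type*} {H : SimpleGraph W} (f : G ↪g H)
    {w' : Sym2 W → ℕ} (hw : ∀ e, w' (e.map f) = w e) :
    matchingWeight H w' (U.map f.toEmbedding) m = matchingWeight G w U m := by
  simp [matchingWeight, matchingsIn_map, hw]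

theorem matchingsIn_eq_of_forall_adj {U' : Finset V} (hU : U' ⊆ U)
    (hadj : ∀ x ∈ U, ∀ y ∈ U, G.Adj x y → x ∈ U') :
    matchingsIn G U m = matchingsIn G U' m := by
  ext s
  simp only [mem_matchingsIn, and_congr_left_iff]
  refine fun hM => ⟨fun hs e he => ?_, fun hs => hs.trans (sym2_mono hU)⟩
  have heU := mem_sym2_iff.1 (hs he)
  have hedge := hM.2.1 e he
  induction e using Sym2.ind with
  | _ x y =>
    simp only [Sym2.mem_iff, forall_eq_or_imp, forall_eq] at heU
    exact mk_mem_sym2_iff.2 ⟨hadj x heU.1 y heU.2 hedge, hadj y heU.2 x heU.1 hedge.symm⟩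

variable [DecidableEq V] {v : V}

theorem filter_matchingsIn_forall_notMem :
    (matchingsIn G U m).filter (fun s => ∀ e ∈ s, v ∉ e) = matchingsIn G (U.erase v) m := by
  ext s
  simp only [mem_filter, mem_matchingsIn, subset_iff, mem_sym2_iff, mem_erase]
  grind

theorem filter_matchingsIn_mem {u : V} (hvu : G.Adj v u) (hv : v ∈ U) (hu : u ∈ U) :
    (matchingsIn G U (m + 1)).filter (s(v, u) ∈ ·) =
      (matchingsIn G ((U.erase v).erase u) m).image (insert s(v, u)) := by
  ext s
  simp only [mem_filter, mem_image, mem_matchingsIn]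
  constructor
  · rintro ⟨⟨hs, hM⟩, he⟩
    refine ⟨s.erase s(v, u), ⟨fun f hf => ?_, hM.erase he⟩, insert_erase he⟩
    have hfs := mem_of_mem_erase hf
    have hdisj := hM.2.2 f hfs _ he (ne_of_mem_erase hf)
    refine mem_sym2_iff.2 fun x hx =>
      mem_erase.2 ⟨?_, mem_erase.2 ⟨?_, mem_sym2_iff.1 (hs hfs) x hx⟩⟩
    · rintro rfl; exact hdisj x hx (Sym2.mem_mk_right _ _)
    · rintro rfl; exact hdisj x hx (Sym2.mem_mk_left _ _)
  · rintro ⟨t, ⟨ht, hM⟩, rfl⟩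
    refine ⟨⟨insert_subset (mk_mem_sym2_iff.2 ⟨hv, hu⟩) (ht.trans (sym2_mono ?_)),
      hM.insert hvu fun f hf x hx hxf => ?_⟩, mem_insert_self _ _⟩
    · exact (erase_subset _ _).trans (erase_subset _ _)
    · have hxU := mem_sym2_iff.1 (ht hf) x hxf
      simp only [mem_erase] at hxU
      rcases Sym2.mem_iff.1 hx with rfl | rfl <;> tauto

theorem filter_matchingsIn_exists_mem [DecidableRel G.Adj] :
    (matchingsIn G U m).filter (fun s => ∃ e ∈ s, v ∈ e) =
      (U.filter (G.Adj v)).biUnion fun u => (matchingsIn G U m).filter (s(v, u) ∈ ·) := by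
  ext s
  simp only [mem_filter, mem_biUnion, mem_matchingsIn]
  constructor
  · rintro ⟨⟨hs, hM⟩, e, he, hve⟩
    obtain ⟨u, rfl⟩ := Sym2.mem_iff_exists.1 hve
    exact ⟨u, ⟨mk_mem_sym2_iff.1 (hs he) |>.2, hM.2.1 _ he⟩, ⟨hs, hM⟩, he⟩
  · rintro ⟨u, -, hsM, he⟩
    exact ⟨hsM, _, he, Sym2.mem_mk_left _ _⟩

theorem pairwiseDisjoint_filter_matchingsIn_mem (T : Finset V) :
    (T : Set V).PairwiseDisjoint fun u => (matchingsIn G U m).filter (s(v, u) ∈ ·) := by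
  intro u _ u' _ huu'
  refine disjoint_left.2 fun s hs hs' => ?_
  simp only [mem_filter, mem_matchingsIn] at hs hs'
  refine hs.1.2.2.2 _ hs.2 _ hs'.2 ?_ v (Sym2.mem_mk_left _ _) (Sym2.mem_mk_left _ _)
  exact fun h => huu' (Sym2.congr_right.1 h)

theorem matchingWeight_succ [DecidableRel G.Adj] (hv : v ∈ U) :
    matchingWeight G w U (m + 1) = matchingWeight G w (U.erase v) (m + 1) +
      ∑ u ∈ U with G.Adj v u, w s(v, u) * matchingWeight G w ((U.erase v).erase u) m := by
  classical
  rw [matchingWeight, ← sum_filter_not_add_sum_filter _ (fun s => ∃ e ∈ s, v ∈ e),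
    filter_matchingsIn_exists_mem, sum_biUnion (pairwiseDisjoint_filter_matchingsIn_mem _)]
  simp only [not_exists, not_and]
  congr 1
  · simp only [matchingWeight, ← filter_matchingsIn_forall_notMem]
  · refine sum_congr rfl fun u hu => ?_
    obtain ⟨huU, hvu⟩ := mem_filter.1 hu
    have hnotMem : ∀ t ∈ matchingsIn G ((U.erase v).erase u) m, s(v, u) ∉ t :=
      fun t ht he => by
        simpa using mem_sym2_iff.1 ((mem_matchingsIn.1 ht).1 he) v (Sym2.mem_mk_left _ _)
    rw [filter_matchingsIn_mem hvu hv huU, sum_image, matchingWeight, mul_sum]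
    · exact sum_congr rfl fun t ht => prod_insert (hnotMem t ht)
    · intro t ht t' ht' h
      rw [← erase_insert (hnotMem t ht), h, erase_insert (hnotMem t' ht')]

end MatchingWeight

section Corona

open Finset

variable {p q : ℕ}

@[simp] theorem corona_adj_inl_inl (i j : Fin p) : (corona p).Adj (inl i) (inl j) ↔ i ≠ j := by
  simp [corona]

@[simp] theorem corona_adj_inl_inr (i j : Fin p) : (corona p).Adj (inl i) (inr j) ↔ i = j := by
  simpa [corona] using eq_comm

@[simp] theorem corona_adj_inr_inl (i j : Fin p) : (corona p).Adj (inr i) (inl j) ↔ i = j := by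
  simpa [corona] using eq_comm

@[simp] theorem corona_adj_inr_inr (i j : Fin p) : ¬(corona p).Adj (inr i) (inr j) := by
  simp [corona]

def coronaEmbedding (g : Fin q ↪ Fin p) : corona q ↪g corona p where
  toEmbedding := g.sumMap g
  map_rel_iff' {x y} := by rcases x with a | a <;> rcases y with b | b <;> simp [g.injective.eq_iff]

open Classical in
noncomputable def coronaWeight (e : Sym2 (Fin p ⊕ Fin p)) : ℕ := if isInternal e then 2 else 1

theorem coronaWeight_map (g : Fin q → Fin p) (e : Sym2 (Fin q ⊕ Fin q)) :
    coronaWeight (e.map (Sum.map g g)) = coronaWeight e := by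
  simp [coronaWeight, isInternal, Sym2.mem_map]

theorem cNum_eq_matchingWeight (p m : ℕ) :
    cNum p m = matchingWeight (corona p) coronaWeight univ m := by
  classical
  simp [cNum, matchingWeight, matchingsIn, coronaWeight, prod_ite]

@[simp] theorem coronaWeight_inl_inl (i j : Fin p) : coronaWeight s(inl i, inl j) = 2 := by
  simp [coronaWeight, isInternal]

@[simp] theorem coronaWeight_inl_inr (i j : Fin p) : coronaWeight s(inl i, inr j) = 1 := by
  simp [coronaWeight, isInternal]

theorem matchingWeight_corona_disjSum (S : Finset (Fin p)) (m : ℕ) :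
    matchingWeight (corona p) coronaWeight (S.disjSum S) m = cNum #S m := by
  set g := (S.orderEmbOfFin rfl).toEmbedding
  have hS (i : Fin p) : (∃ a, g a = i) ↔ i ∈ S :=
    Set.ext_iff.1 (S.range_orderEmbOfFin rfl) i
  rw [cNum_eq_matchingWeight, ← matchingWeight_map (coronaEmbedding g) (coronaWeight_map g)]
  congr 1
  ext (x | x) <;> simp [coronaEmbedding, hS]

-- The pendant vertices `inr i` with `i ∈ S \ T` are isolated in `T.disjSum S`.
theorem matchingWeight_corona_disjSum_of_subset (w : Sym2 (Fin p ⊕ Fin p) → ℕ)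
    {S T : Finset (Fin p)} (hTS : T ⊆ S) (m : ℕ) :
    matchingWeight (corona p) w (T.disjSum S) m = matchingWeight (corona p) w (T.disjSum T) m := by
  rw [matchingWeight, matchingsIn_eq_of_forall_adj (U' := T.disjSum T)]
  · rfl
  · exact disjSum_mono subset_rfl hTS
  · rintro (x | x) hx (y | y) hy h <;> simp_all

theorem matchingWeight_corona_succ {S : Finset (Fin p)} {a : Fin p} (ha : a ∈ S) (m : ℕ) :
    matchingWeight (corona p) coronaWeight (S.disjSum S) (m + 1) =
      matchingWeight (corona p) coronaWeight ((S.erase a).disjSum (S.erase a)) (m + 1) +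
      matchingWeight (corona p) coronaWeight ((S.erase a).disjSum (S.erase a)) m +
      2 * ∑ b ∈ S.erase a, matchingWeight (corona p) coronaWeight
        (((S.erase a).erase b).disjSum ((S.erase a).erase b)) m := by
  classical
  rw [matchingWeight_succ (inl_mem_disjSum.2 ha), sum_filter, sum_disjSum]
  simp only [disjSum_erase_inl, disjSum_erase_inr, corona_adj_inl_inl, corona_adj_inl_inr,
    coronaWeight_inl_inl, coronaWeight_inl_inr, one_mul, sum_ite_eq, ha, if_true]
  have hpairs : ∑ b ∈ S.erase a, 2 * matchingWeight (corona p) coronaWeight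
      (((S.erase a).erase b).disjSum S) m = 2 * ∑ b ∈ S.erase a, matchingWeight (corona p)
        coronaWeight (((S.erase a).erase b).disjSum ((S.erase a).erase b)) m := by
    rw [mul_sum]
    exact sum_congr rfl fun b _ => by
      rw [matchingWeight_corona_disjSum_of_subset _ ((erase_subset b _).trans (erase_subset a S))]
  rw [← sum_filter, filter_ne, hpairs,
    matchingWeight_corona_disjSum_of_subset _ (erase_subset a S)]
  ring

end Corona

open Finset in
theorem cNum_succ_succ (n k : ℕ) :
    cNum (n + 1) (k + 1) = cNum n k + cNum n (k + 1) + 2 * n * cNum (n - 1) k := by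
  have h := matchingWeight_corona_succ (mem_univ (0 : Fin (n + 1))) k
  have hcard : #(univ.erase (0 : Fin (n + 1))) = n := by simp
  have hpairs : ∑ b ∈ univ.erase (0 : Fin (n + 1)), cNum #((univ.erase 0).erase b) k =
      n * cNum (n - 1) k := by
    rw [sum_congr rfl fun b hb => by rw [card_erase_of_mem hb, hcard], sum_const, hcard,
      smul_eq_mul]
  simp only [matchingWeight_corona_disjSum, hcard, hpairs, card_univ, Fintype.card_fin] at h
  rw [h]
  ring

/-- For all integers `p ≥ 2` and `m ≥ 1`, the numbers `c_{p,m}` satisfy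
the recurrence `c_{p,m} = c_{p-1,m-1} + c_{p-1,m} + 2(p-1)·c_{p-2,m-1}`. -/
theorem cNum_recurrence (p m : ℕ) (hp : 2 ≤ p) (hm : 1 ≤ m) :
    cNum p m = cNum (p - 1) (m - 1) + cNum (p - 1) m + 2 * (p - 1) * cNum (p - 2) (m - 1) := by
  obtain ⟨n, rfl⟩ : ∃ n, p = n + 1 := ⟨p - 1, by omega⟩
  obtain ⟨k, rfl⟩ : ∃ k, m = k + 1 := ⟨m - 1, by omega⟩
  simpa using cNum_succ_succ n k
end

section
/- Let p = m+n with m, n ≥ 0 and p ≥ 1. For an m-matching S of the corona graph C_p, define D(S) to be the set consisting of all internal edges of S together with the pendant edges v_i w_i for exactly those indices i such that the vertex v_i is not covered by any edge of S. Then D(S) is an n-matching of C_p, and S ↦ D(S) is a bijection from the set of m-matchings of C_p onto the set of n-matchings of C_p satisfying D(D(S)) = S. -/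
open Sum Matrix

open Classical in
/-- The dual `D(S)` of a matching `S` of the corona graph `C_p`: it consists of all
internal edges of `S` together with the pendant edges `v_i w_i` for exactly those
indices `i` such that `v_i` is not covered by any edge of `S`. -/
noncomputable def Ddual (p : ℕ) (s : Finset (Sym2 (Fin p ⊕ Fin p))) :
    Finset (Sym2 (Fin p ⊕ Fin p)) :=
  s.filter (fun e => isInternal e) ∪
    (Finset.univ.filter (fun i : Fin p =>
        ¬ ∃ e ∈ s, (Sum.inl i : Fin p ⊕ Fin p) ∈ e)).image
      (fun i => s(Sum.inl i, (Sum.inr i : Fin p ⊕ Fin p)))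

/-! Every edge of a matching of `C_p` covers one `v`-vertex if it is pendant and two if it is
internal, so an `m`-matching with `k` internal edges leaves `p - m - k` of the `v_i` uncovered
and `D(S)` has `k + (p - m - k) = p - m` edges. Since `D(S)` keeps the internal edges of `S`,
a vertex `v_i` is left uncovered by `D(S)` exactly when `v_i w_i ∈ S`; so applying `D` once more
restores the pendant edges of `S`, and `D(D(S)) = S`. -/

namespace Corona

open Classical Finset

variable {p : ℕ}

def pendant (i : Fin p) : Sym2 (Fin p ⊕ Fin p) := s(inl i, inr i)

def leftEnds (e : Sym2 (Fin p ⊕ Fin p)) : Finset (Fin p) := univ.filter fun i => inl i ∈ e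

def coveredLeft (s : Finset (Sym2 (Fin p ⊕ Fin p))) : Finset (Fin p) := s.biUnion leftEnds

lemma mem_coveredLeft {s : Finset (Sym2 (Fin p ⊕ Fin p))} {i : Fin p} :
    i ∈ coveredLeft s ↔ ∃ e ∈ s, inl i ∈ e := by
  simp [coveredLeft, leftEnds]

lemma pendant_injective : Function.Injective (pendant (p := p)) := by
  intro i j h
  simpa [pendant] using h

lemma inl_mem_pendant_iff {i j : Fin p} : inl i ∈ pendant j ↔ i = j := by
  simp [pendant]

lemma mem_pendant {v : Fin p ⊕ Fin p} {i : Fin p} : v ∈ pendant i ↔ v = inl i ∨ v = inr i :=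
  Sym2.mem_iff

lemma eq_of_mem_pendant_of_mem_pendant {v : Fin p ⊕ Fin p} {i j : Fin p} (hi : v ∈ pendant i)
    (hj : v ∈ pendant j) : i = j := by
  rcases mem_pendant.1 hi with rfl | rfl <;> simpa [mem_pendant] using hj

lemma pendant_mem_edgeSet (i : Fin p) : pendant i ∈ (corona p).edgeSet :=
  Or.inr (Or.inl ⟨i, rfl, rfl⟩)

lemma isInternal_inl_inl (i j : Fin p) : isInternal s(inl i, (inl j : Fin p ⊕ Fin p)) := by
  intro v hv
  rcases Sym2.mem_iff.1 hv with rfl | rfl <;> rfl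

lemma not_isInternal_pendant (i : Fin p) : ¬ isInternal (pendant i) :=
  fun h => by simpa using h (inr i) (by simp [pendant])

lemma eq_inl_inl_or_eq_pendant {e : Sym2 (Fin p ⊕ Fin p)} (he : e ∈ (corona p).edgeSet) :
    (∃ i j : Fin p, i ≠ j ∧ e = s(inl i, inl j)) ∨ ∃ i, e = pendant i := by
  induction e using Sym2.ind with
  | _ x y =>
    rcases he with ⟨i, j, hij, rfl, rfl⟩ | ⟨i, rfl, rfl⟩ | ⟨i, rfl, rfl⟩
    · exact Or.inl ⟨i, j, hij, rfl⟩
    · exact Or.inr ⟨i, rfl⟩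
    · exact Or.inr ⟨i, Sym2.eq_swap⟩

lemma card_leftEnds {e : Sym2 (Fin p ⊕ Fin p)} (he : e ∈ (corona p).edgeSet) :
    #(leftEnds e) = 1 + if isInternal e then 1 else 0 := by
  rcases eq_inl_inl_or_eq_pendant he with ⟨i, j, hij, rfl⟩ | ⟨i, rfl⟩
  · have hends : leftEnds s(inl i, (inl j : Fin p ⊕ Fin p)) = {i, j} := by
      ext; simp [leftEnds]
    rw [hends, if_pos (isInternal_inl_inl i j), card_pair hij]
  · have hends : leftEnds (pendant i) = {i} := by
      ext; simp [leftEnds, inl_mem_pendant_iff]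
    rw [hends, if_neg (not_isInternal_pendant i), card_singleton]

lemma card_coveredLeft {m : ℕ} {s : Finset (Sym2 (Fin p ⊕ Fin p))}
    (hs : IsNMatching (corona p) m s) :
    #(coveredLeft s) = m + #(s.filter isInternal) := by
  obtain ⟨hcard, hedge, hdisj⟩ := hs
  have hdisjoint : (s : Set (Sym2 (Fin p ⊕ Fin p))).PairwiseDisjoint leftEnds :=
    fun e he f hf hef => disjoint_left.2 fun i hie hif =>
      hdisj e he f hf hef _ (mem_filter.1 hie).2 (mem_filter.1 hif).2
  rw [coveredLeft, card_biUnion hdisjoint, sum_congr rfl fun e he => card_leftEnds (hedge e he),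
    sum_add_distrib, card_filter, ← card_eq_sum_ones, hcard]

lemma ddual_eq (s : Finset (Sym2 (Fin p ⊕ Fin p))) :
    Ddual p s = s.filter isInternal ∪ (coveredLeft s)ᶜ.image pendant := by
  ext e
  simp [Ddual, coveredLeft, leftEnds, pendant]

lemma mem_ddual {s : Finset (Sym2 (Fin p ⊕ Fin p))} {e : Sym2 (Fin p ⊕ Fin p)} :
    e ∈ Ddual p s ↔ (e ∈ s ∧ isInternal e) ∨ ∃ i ∉ coveredLeft s, e = pendant i := by
  simp [ddual_eq, eq_comm]

lemma card_ddual {m : ℕ} {s : Finset (Sym2 (Fin p ⊕ Fin p))}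
    (hs : IsNMatching (corona p) m s) : #(Ddual p s) = p - m := by
  have hdisj : Disjoint (s.filter isInternal) ((coveredLeft s)ᶜ.image pendant) := by
    simp only [disjoint_left, mem_filter, mem_image]
    rintro _ ⟨-, hint⟩ ⟨i, -, rfl⟩
    exact not_isInternal_pendant i hint
  rw [ddual_eq, card_union_of_disjoint hdisj, card_image_of_injective _ pendant_injective,
    card_compl, Fintype.card_fin]
  have hcov := card_coveredLeft hs
  have hle : #(coveredLeft s) ≤ p := by simpa using card_le_univ (coveredLeft s)
  omega

lemma notMem_pendant_of_isInternal {e : Sym2 (Fin p ⊕ Fin p)} {i : Fin p} (hint : isInternal e)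
    (hi : inl i ∉ e) {v : Fin p ⊕ Fin p} (hv : v ∈ e) : v ∉ pendant i := by
  rw [mem_pendant]
  rintro (rfl | rfl)
  · exact hi hv
  · simpa using hint _ hv

lemma inl_notMem_of_notMem_coveredLeft {s : Finset (Sym2 (Fin p ⊕ Fin p))} {i : Fin p}
    (hi : i ∉ coveredLeft s) {e : Sym2 (Fin p ⊕ Fin p)} (he : e ∈ s) : inl i ∉ e :=
  fun h => hi (mem_coveredLeft.2 ⟨e, he, h⟩)

lemma notMem_coveredLeft_ddual_iff {m : ℕ} {s : Finset (Sym2 (Fin p ⊕ Fin p))}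
    (hs : IsNMatching (corona p) m s) (i : Fin p) :
    i ∉ coveredLeft (Ddual p s) ↔ pendant i ∈ s := by
  obtain ⟨-, hedge, hdisj⟩ := hs
  constructor
  · intro hi
    by_cases hcov : i ∈ coveredLeft s
    · obtain ⟨e, hes, hie⟩ := mem_coveredLeft.1 hcov
      rcases eq_inl_inl_or_eq_pendant (hedge e hes) with ⟨a, b, -, rfl⟩ | ⟨j, rfl⟩
      · exact absurd hie (inl_notMem_of_notMem_coveredLeft hi
          (mem_ddual.2 (Or.inl ⟨hes, isInternal_inl_inl a b⟩)))
      · rwa [inl_mem_pendant_iff.1 hie]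
    · exact absurd (inl_mem_pendant_iff.2 rfl) (inl_notMem_of_notMem_coveredLeft hi
        (mem_ddual.2 (Or.inr ⟨i, hcov, rfl⟩)))
  · intro hpen hi
    obtain ⟨e, heD, hie⟩ := mem_coveredLeft.1 hi
    rcases mem_ddual.1 heD with ⟨hes, hint⟩ | ⟨j, hj, rfl⟩
    · have hne : e ≠ pendant i := by
        rintro rfl
        exact not_isInternal_pendant i hint
      exact hdisj e hes _ hpen hne _ hie (inl_mem_pendant_iff.2 rfl)
    · rw [← inl_mem_pendant_iff.1 hie] at hj
      exact inl_notMem_of_notMem_coveredLeft hj hpen (inl_mem_pendant_iff.2 rfl)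

end Corona

open Corona

lemma IsNMatching.ddual {p m n : ℕ} {s : Finset (Sym2 (Fin p ⊕ Fin p))}
    (hs : IsNMatching (corona p) m s) (hp : p = m + n) : IsNMatching (corona p) n (Ddual p s) := by
  have hcard := card_ddual hs
  obtain ⟨-, hedge, hdisj⟩ := hs
  refine ⟨by omega, ?_, ?_⟩
  · intro e he
    rcases mem_ddual.1 he with ⟨hes, -⟩ | ⟨i, -, rfl⟩
    exacts [hedge e hes, pendant_mem_edgeSet i]
  · intro e he f hf hef v hve hvf
    rcases mem_ddual.1 he with ⟨hes, hei⟩ | ⟨i, hi, rfl⟩ <;>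
      rcases mem_ddual.1 hf with ⟨hfs, hfi⟩ | ⟨j, hj, rfl⟩
    · exact hdisj e hes f hfs hef v hve hvf
    · exact notMem_pendant_of_isInternal hei (inl_notMem_of_notMem_coveredLeft hj hes) hve hvf
    · exact notMem_pendant_of_isInternal hfi (inl_notMem_of_notMem_coveredLeft hi hfs) hvf hve
    · exact hef (congrArg pendant (eq_of_mem_pendant_of_mem_pendant hve hvf))

lemma IsNMatching.ddual_ddual {p m : ℕ} {s : Finset (Sym2 (Fin p ⊕ Fin p))}
    (hs : IsNMatching (corona p) m s) : Ddual p (Ddual p s) = s := by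
  ext e
  rw [mem_ddual]
  constructor
  · rintro (⟨heD, hint⟩ | ⟨i, hi, rfl⟩)
    · rcases mem_ddual.1 heD with ⟨hes, -⟩ | ⟨i, -, rfl⟩
      exacts [hes, absurd hint (not_isInternal_pendant i)]
    · exact (notMem_coveredLeft_ddual_iff hs i).1 hi
  · intro hes
    rcases eq_inl_inl_or_eq_pendant (hs.2.1 e hes) with ⟨a, b, -, rfl⟩ | ⟨i, rfl⟩
    · exact Or.inl ⟨mem_ddual.2 (Or.inl ⟨hes, isInternal_inl_inl a b⟩), isInternal_inl_inl a b⟩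
    · exact Or.inr ⟨i, (notMem_coveredLeft_ddual_iff hs i).2 hes, rfl⟩

theorem corona_matching_duality_general (p m n : ℕ) (hp : p = m + n) :
    (∀ s : Finset (Sym2 (Fin p ⊕ Fin p)), IsNMatching (corona p) m s →
      IsNMatching (corona p) n (Ddual p s)) ∧
    (∀ s : Finset (Sym2 (Fin p ⊕ Fin p)), IsNMatching (corona p) m s →
      Ddual p (Ddual p s) = s) ∧
    ∃ F : {s : Finset (Sym2 (Fin p ⊕ Fin p)) // IsNMatching (corona p) m s} ≃
          {s : Finset (Sym2 (Fin p ⊕ Fin p)) // IsNMatching (corona p) n s},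
      ∀ s, (F s : Finset (Sym2 (Fin p ⊕ Fin p))) = Ddual p s.1 :=
  ⟨fun _ hs => hs.ddual hp, fun _ hs => hs.ddual_ddual,
    { toFun := fun s => ⟨Ddual p s, s.2.ddual hp⟩
      invFun := fun s => ⟨Ddual p s, s.2.ddual (by omega)⟩
      left_inv := fun s => Subtype.ext s.2.ddual_ddual
      right_inv := fun s => Subtype.ext s.2.ddual_ddual }, fun _ => rfl⟩

/-- Let `p = m + n ≥ 1` with `m, n ≥ 0`. For every `m`-matching `S` of
the corona graph `C_p`, the dual `D(S)` is an `n`-matching of `C_p`, `D(D(S)) = S`, and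
`S ↦ D(S)` is a bijection from the `m`-matchings of `C_p` onto the `n`-matchings
of `C_p`. -/
theorem corona_matching_duality (p m n : ℕ) (hp : p = m + n) (h1 : 1 ≤ p) :
    (∀ s : Finset (Sym2 (Fin p ⊕ Fin p)), IsNMatching (corona p) m s →
      IsNMatching (corona p) n (Ddual p s)) ∧
    (∀ s : Finset (Sym2 (Fin p ⊕ Fin p)), IsNMatching (corona p) m s →
      Ddual p (Ddual p s) = s) ∧
    ∃ F : {s : Finset (Sym2 (Fin p ⊕ Fin p)) // IsNMatching (corona p) m s} ≃
          {s : Finset (Sym2 (Fin p ⊕ Fin p)) // IsNMatching (corona p) n s},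
      ∀ s, (F s : Finset (Sym2 (Fin p ⊕ Fin p))) = Ddual p s.1 :=
  corona_matching_duality_general p m n hp
end
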